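/- Let n, mu1, mu2 be integers with 1 <= mu1 <= mu2 <= n - mu1 - mu2. Let psi = [C1 | C2 | C3] be a 4 x 3 matrix over A = K[u,v] whose columns C1, C2, C3 have entries homogeneous of degrees mu1, mu2, n - mu1 - mu2 respectively, and suppose the signed 3 x 3 minors of psi generate a height-2 ideal of A. For each j in {1,2,3}, suppose the entries of C_j generate a height-2 ideal of A and let phi_j be a 4 x 3 matrix over A with homogeneous entries such that C_j^T · phi_j = 0 and the entries of C_j equal the signed 3 x 3 minors of phi_j. Then for all i != j in {1,2,3}, the three entries of the row vector C_i^T · phi_j generate a height-2 ideal of A; in particular C_i^T · phi_j != 0 and its entries have no common non-unit divisor. -/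
import Mathlib


open MvPolynomial Matrix

/-- The height (codimension) of an ideal: the infimum of the heights of the primes
containing it. -/
noncomputable def idealHeight {A : Type*} [CommRing A] (I : Ideal A) : ℕ∞ :=
  ⨅ (P : PrimeSpectrum A) (_ : I ≤ P.asIdeal), Order.height P

lemma idealHeight_le_height {A : Type*} [CommRing A] {I : Ideal A} {P : PrimeSpectrum A}
    (h : I ≤ P.asIdeal) : idealHeight I ≤ Order.height P :=
  le_trans (iInf_le _ P) (iInf_le _ h)

lemma idealHeight_mono' {A : Type*} [CommRing A] {I J : Ideal A} (h : I ≤ J) :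
    idealHeight I ≤ idealHeight J :=
  le_iInf fun P => le_iInf fun hJP => idealHeight_le_height (le_trans h hJP)

/-- In a domain with well-founded divisibility, a prime generated by a prime element
has height at most one. -/
lemma height_le_one_of_span_singleton {A : Type*} [CommRing A] [IsDomain A] [WfDvdMonoid A]
    {p : A} (hp : Prime p) (P : PrimeSpectrum A) (hP : P.asIdeal = Ideal.span {p}) :
    Order.height P ≤ 1 := by
  rw [Order.height_eq_iSup_lt_height]
  refine iSup₂_le fun Q hQ => ?_
  have hQbot : Q.asIdeal = ⊥ := by
    by_contra hne
    obtain ⟨a, haQ, ha0⟩ := Submodule.exists_mem_ne_zero_of_ne_bot hne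
    have hpQ : p ∉ Q.asIdeal := by
      intro hmem
      have h1 : P.asIdeal ≤ Q.asIdeal := by
        rw [hP]
        exact (Ideal.span_singleton_le_iff_mem _).mpr hmem
      exact hQ.not_ge ((PrimeSpectrum.asIdeal_le_asIdeal _ _).mp h1)
    have key : ∀ n : ℕ, ∃ b ∈ Q.asIdeal, a = p ^ n * b := by
      intro n
      induction n with
      | zero => exact ⟨a, haQ, by simp⟩
      | succ n ih =>
        obtain ⟨b, hbQ, hab⟩ := ih
        have hbP : b ∈ P.asIdeal := hQ.le hbQ
        rw [hP, Ideal.mem_span_singleton] at hbP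
        obtain ⟨c, rfl⟩ := hbP
        have hcQ : c ∈ Q.asIdeal := (Q.isPrime.mem_or_mem hbQ).resolve_left hpQ
        exact ⟨c, hcQ, by rw [hab, pow_succ]; ring⟩
    obtain ⟨m, c, hc, hac⟩ := WfDvdMonoid.max_power_factor ha0 hp.irreducible
    obtain ⟨b, hbQ, hab⟩ := key (m + 1)
    apply hc
    have hdvd : p ^ (m + 1) ∣ p ^ m * c := by
      rw [← hac, hab]
      exact Dvd.intro _ rfl
    rw [pow_succ] at hdvd
    exact (mul_dvd_mul_iff_left (pow_ne_zero m hp.ne_zero)).mp hdvd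
  have hQ0 : Order.height Q = 0 := by
    rw [Order.height_eq_zero]
    intro R hR
    have h1 : R.asIdeal ≤ Q.asIdeal := hR
    rw [hQbot, le_bot_iff] at h1
    have : Q.asIdeal ≤ R.asIdeal := by rw [hQbot, h1]
    exact this
  rw [hQ0, zero_add]

/-- Over a field, if a `4 × 3` matrix has an invertible maximal submatrix (deleting row `k₀`),
then any two vectors in the left kernel with comparable `k₀`-entries are proportional. -/
lemma row_solution_proportional {F : Type*} [Field F]
    (φ : Matrix (Fin 4) (Fin 3) F) (k₀ : Fin 4)
    (hdet : (φ.submatrix k₀.succAbove id).det ≠ 0)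
    (ci cj : Fin 4 → F) (hcj : cj k₀ ≠ 0)
    (hi : ∀ l, ∑ k, ci k * φ k l = 0) (hj : ∀ l, ∑ k, cj k * φ k l = 0) :
    ∀ k, ci k = (ci k₀ / cj k₀) * cj k := by
  set N := φ.submatrix k₀.succAbove id with hN
  have hNunit : IsUnit N.det := isUnit_iff_ne_zero.mpr hdet
  have main : ∀ v : Fin 4 → F, (∀ l, ∑ k, v k * φ k l = 0) → ∀ m : Fin 3,
      v (k₀.succAbove m) = v k₀ * (((fun l => -φ k₀ l) ᵥ* N⁻¹) m) := by
    intro v hv m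
    have h1 : (fun m => v (k₀.succAbove m)) ᵥ* N = fun l => v k₀ * (-φ k₀ l) := by
      funext l
      have h2 := hv l
      rw [Fin.sum_univ_succAbove _ k₀] at h2
      simp only [Matrix.vecMul, dotProduct, hN, Matrix.submatrix_apply, id]
      linear_combination h2
    have h3 : (fun m => v (k₀.succAbove m)) = (fun l => v k₀ * (-φ k₀ l)) ᵥ* N⁻¹ := by
      rw [← h1, Matrix.vecMul_vecMul, Matrix.mul_nonsing_inv _ hNunit, Matrix.vecMul_one]
    have h4 : (fun l => v k₀ * (-φ k₀ l)) = v k₀ • (fun l => -φ k₀ l) := by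
      funext l
      simp [smul_eq_mul]
    calc v (k₀.succAbove m) = ((fun l => v k₀ * (-φ k₀ l)) ᵥ* N⁻¹) m := congrFun h3 m
      _ = (v k₀ • ((fun l => -φ k₀ l) ᵥ* N⁻¹)) m := by rw [h4, Matrix.smul_vecMul]
      _ = v k₀ * (((fun l => -φ k₀ l) ᵥ* N⁻¹) m) := rfl
  intro k
  rcases eq_or_ne k k₀ with rfl | hk
  · rw [div_mul_cancel₀ _ hcj]
  · obtain ⟨m, rfl⟩ := Fin.exists_succAbove_eq hk
    rw [main ci hi m, main cj hj m]
    field_simp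

/-- A `3 × 3` matrix over a field with two proportional columns has vanishing determinant. -/
lemma det_eq_zero_of_prop_columns {F : Type*} [Field F] (M : Matrix (Fin 3) (Fin 3) F)
    {i j : Fin 3} (hij : i ≠ j) (lam : F) (h : ∀ r, M r i = lam * M r j) : M.det = 0 := by
  have hM : M = M.updateCol i (fun r => lam * M r j) := by
    ext r c
    rcases eq_or_ne c i with rfl | hc
    · rw [Matrix.updateCol_apply]
      simp [h r]
    · rw [Matrix.updateCol_apply, if_neg hc]
  have hsmul : (fun r => lam * M r j) = lam • (fun r => M r j) := by
    funext r
    simp [smul_eq_mul]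
  conv_lhs => rw [hM]
  rw [hsmul, Matrix.det_updateCol_smul, Matrix.det_updateCol_eq_zero hij.symm, mul_zero]

set_option maxHeartbeats 1000000
set_option synthInstance.maxHeartbeats 400000

/-- Let `ψ = [C₁ | C₂ | C₃]` be a `4 × 3` matrix over `A = K[u,v]` with column degrees
`μ₁, μ₂, n - μ₁ - μ₂`, whose signed `3 × 3` minors generate a height-2 ideal, and suppose
each column `Cⱼ` has height-2 ideal of entries with Hilbert–Burch matrix `φⱼ` (so
`Cⱼᵀ φⱼ = 0` and the entries of `Cⱼ` are the signed maximal minors of `φⱼ`).  Then for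
`i ≠ j`, the entries of the row vector `Cᵢᵀ φⱼ` generate a height-2 ideal of `A`; in
particular `Cᵢᵀ φⱼ ≠ 0` and its entries have no common non-unit divisor.
Here `X 0 = u`, `X 1 = v`, and column `j` of `ψ` is `Cⱼ₊₁`. -/
theorem entries_of_CiT_phij_height_two
    (K : Type*) [Field K]
    (n mu1 mu2 : ℕ) (h1 : 1 ≤ mu1) (h2 : mu1 ≤ mu2) (h3 : mu2 ≤ n - mu1 - mu2)
    (psi : Matrix (Fin 4) (Fin 3) (MvPolynomial (Fin 2) K))
    (hpsideg : ∀ (i : Fin 4) (j : Fin 3),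
      (psi i j).IsHomogeneous (![mu1, mu2, n - mu1 - mu2] j))
    (hpsiht : idealHeight (Ideal.span (Set.range
        (fun i : Fin 4 => (-1 : MvPolynomial (Fin 2) K) ^ (i : ℕ) *
          (psi.submatrix i.succAbove id).det))) = 2)
    (phi : Fin 3 → Matrix (Fin 4) (Fin 3) (MvPolynomial (Fin 2) K))
    (hColht : ∀ j : Fin 3, idealHeight (Ideal.span (Set.range (fun i => psi i j))) = 2)
    (hphihom : ∀ (j : Fin 3) (k : Fin 4) (l : Fin 3),
      ∃ e : ℕ, ((phi j) k l).IsHomogeneous e)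
    (hortho : ∀ (j : Fin 3) (l : Fin 3), ∑ k, psi k j * (phi j) k l = 0)
    (hminors : ∀ (j : Fin 3) (k : Fin 4),
      psi k j = (-1) ^ (k : ℕ) * ((phi j).submatrix k.succAbove id).det) :
    ∀ i j : Fin 3, i ≠ j →
      idealHeight (Ideal.span (Set.range (fun l : Fin 3 => ∑ k, psi k i * (phi j) k l))) = 2 ∧
      (fun l : Fin 3 => ∑ k, psi k i * (phi j) k l) ≠ 0 ∧
      ∀ d : MvPolynomial (Fin 2) K,
        (∀ l : Fin 3, d ∣ ∑ k, psi k i * (phi j) k l) → IsUnit d := by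
  classical
  intro i j hij
  -- The key claim: every prime containing the entries of `Cᵢᵀ φⱼ` has height at least 2.
  have key : ∀ P : PrimeSpectrum (MvPolynomial (Fin 2) K),
      (∀ l : Fin 3, (∑ k, psi k i * (phi j) k l) ∈ P.asIdeal) →
      (2 : ℕ∞) ≤ Order.height P := by
    intro P hP
    by_cases hcol : ∀ k : Fin 4, psi k j ∈ P.asIdeal
    · have hsub : Ideal.span (Set.range fun k => psi k j) ≤ P.asIdeal :=
        Ideal.span_le.mpr (Set.range_subset_iff.mpr hcol)
      calc (2 : ℕ∞) = _ := (hColht j).symm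
        _ ≤ _ := idealHeight_le_height hsub
    · push_neg at hcol
      obtain ⟨k₀, hk₀⟩ := hcol
      haveI := P.isPrime
      set B := MvPolynomial (Fin 2) K ⧸ P.asIdeal with hB
      set F := FractionRing B with hF
      set π : MvPolynomial (Fin 2) K →+* F :=
        (algebraMap B F).comp (Ideal.Quotient.mk P.asIdeal) with hπ
      have hker : ∀ x, π x = 0 ↔ x ∈ P.asIdeal := by
        intro x
        rw [hπ, RingHom.comp_apply,
          map_eq_zero_iff _ (IsFractionRing.injective B F)]
        exact Ideal.Quotient.eq_zero_iff_mem
      -- linear relations over F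
      have hπj : ∀ l, ∑ k, π (psi k j) * ((phi j).map π) k l = 0 := by
        intro l
        have h0 := congrArg π (hortho j l)
        simpa [map_sum, _root_.map_mul, Matrix.map_apply] using h0
      have hπi : ∀ l, ∑ k, π (psi k i) * ((phi j).map π) k l = 0 := by
        intro l
        have h0 : π (∑ k, psi k i * (phi j) k l) = 0 := (hker _).mpr (hP l)
        simpa [map_sum, _root_.map_mul, Matrix.map_apply] using h0
      -- mapped minor identity
      have hcjentry : ∀ k : Fin 4, π (psi k j) =
          (-1 : F) ^ (k : ℕ) * ((((phi j).submatrix k.succAbove id)).map π).det := by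
        intro k
        rw [hminors j k, _root_.map_mul, map_pow, map_neg, _root_.map_one, RingHom.map_det, RingHom.mapMatrix_apply]
      have hcj0 : π (psi k₀ j) ≠ 0 := fun h0 => hk₀ ((hker _).mp h0)
      have hdet0 : ((((phi j).map π)).submatrix k₀.succAbove id).det ≠ 0 := by
        intro h0
        apply hcj0
        rw [hcjentry k₀, ← Matrix.submatrix_map, h0, mul_zero]
      have hprop := row_solution_proportional ((phi j).map π) k₀ hdet0
        (fun k => π (psi k i)) (fun k => π (psi k j)) hcj0 hπi hπj
      -- all signed minors of ψ lie in P
      have hminorsP : ∀ k : Fin 4,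
          ((-1 : MvPolynomial (Fin 2) K) ^ (k : ℕ) * (psi.submatrix k.succAbove id).det)
            ∈ P.asIdeal := by
        intro k
        apply (hker _).mp
        rw [_root_.map_mul, map_pow, map_neg, _root_.map_one, RingHom.map_det, RingHom.mapMatrix_apply]
        have hzero : ((psi.submatrix k.succAbove id).map π).det = 0 := by
          apply det_eq_zero_of_prop_columns _ hij (π (psi k₀ i) / π (psi k₀ j))
          intro r
          exact hprop (k.succAbove r)
        rw [hzero, mul_zero]
      have hspan : Ideal.span (Set.range
          (fun k : Fin 4 => (-1 : MvPolynomial (Fin 2) K) ^ (k : ℕ) *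
            (psi.submatrix k.succAbove id).det)) ≤ P.asIdeal :=
        Ideal.span_le.mpr (Set.range_subset_iff.mpr hminorsP)
      calc (2 : ℕ∞) = _ := hpsiht.symm
        _ ≤ _ := idealHeight_le_height hspan
  -- upper bound for the height
  have hle : idealHeight (Ideal.span (Set.range
      (fun l : Fin 3 => ∑ k, psi k i * (phi j) k l))) ≤ 2 := by
    have hsub : Ideal.span (Set.range (fun l : Fin 3 => ∑ k, psi k i * (phi j) k l)) ≤
        Ideal.span (Set.range (fun k : Fin 4 => psi k i)) := by
      rw [Ideal.span_le]
      rintro x ⟨l, rfl⟩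
      exact Ideal.sum_mem _ fun k _ => Ideal.mul_mem_right _ _ (Ideal.subset_span ⟨k, rfl⟩)
    calc idealHeight _ ≤ _ := idealHeight_mono' hsub
      _ = 2 := hColht i
  have hge : (2 : ℕ∞) ≤ idealHeight (Ideal.span (Set.range
      (fun l : Fin 3 => ∑ k, psi k i * (phi j) k l))) :=
    le_iInf fun P => le_iInf fun hPle =>
      key P (fun l => hPle (Ideal.subset_span ⟨l, rfl⟩))
  have hht := le_antisymm hle hge
  have hne : (fun l : Fin 3 => ∑ k, psi k i * (phi j) k l) ≠ 0 := by
    intro h0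
    have hP0 : ∀ l : Fin 3, (∑ k, psi k i * (phi j) k l) ∈
        (⊥ : PrimeSpectrum (MvPolynomial (Fin 2) K)).asIdeal := by
      intro l
      have hl := congrFun h0 l
      simpa [Ideal.mem_bot] using hl
    have h2 := key ⊥ hP0
    rw [Order.height_eq_zero.mpr isMin_bot] at h2
    exact absurd h2 (by norm_num)
  refine ⟨hht, hne, ?_⟩
  intro d hd
  by_contra hdu
  have hd0 : d ≠ 0 := by
    rintro rfl
    exact hne (funext fun l => zero_dvd_iff.mp (hd l))
  obtain ⟨q, hqirr, hqd⟩ := WfDvdMonoid.exists_irreducible_factor hdu hd0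
  have hq : Prime q := UniqueFactorizationMonoid.irreducible_iff_prime.mp hqirr
  set P : PrimeSpectrum (MvPolynomial (Fin 2) K) :=
    ⟨Ideal.span {q}, (Ideal.span_singleton_prime hq.ne_zero).mpr hq⟩ with hPdef
  have h2 := key P (fun l => Ideal.mem_span_singleton.mpr ((hqd.trans (hd l))))
  have hle1 := height_le_one_of_span_singleton hq P rfl
  exact absurd (h2.trans hle1) (by norm_num)
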